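/- arXiv:1608.08441 — 4 statements merged into one kernel-verified Lean document; each statement's English description precedes it below -/
import Mathlib

section
/- Let β, γ > 0 and μ, λ, h ∈ ℝ. If r > 0 satisfies the gap equation tanh(β·g_r) = (2·g_r/γ)·(1 + e^{λβ}·cosh(βh)/cosh(β·g_r)), where g_r := √((μ−λ)² + γ²·r), then r ≤ 1/4 − (μ−λ)²/γ². In particular, if γ ≤ 2·|μ−λ| the gap equation has no strictly positive solution. -/
/-- Any strictly positive solution of the BCS gap equation satisfies
`r ≤ 1/4 − (μ−λ)²/γ²`; in particular `γ > 2|μ−λ|`. -/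
theorem gap_equation_solution_bound
    (β γ μ lam h r : ℝ) (hβ : 0 < β) (hγ : 0 < γ) (hr : 0 < r)
    (g : ℝ) (hg : g = Real.sqrt ((μ - lam) ^ 2 + γ ^ 2 * r))
    (hgap : Real.tanh (β * g)
      = (2 * g / γ) * (1 + Real.exp (lam * β) * Real.cosh (β * h) / Real.cosh (β * g))) :
    r ≤ 1 / 4 - (μ - lam) ^ 2 / γ ^ 2 ∧ 2 * |μ - lam| < γ := by
  have hg0 : 0 ≤ g := hg ▸ Real.sqrt_nonneg _
  have hgsq : g ^ 2 = (μ - lam) ^ 2 + γ ^ 2 * r := by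
    rw [hg, Real.sq_sqrt]
    positivity
  have hE : 0 < Real.exp (lam * β) * Real.cosh (β * h) / Real.cosh (β * g) := by
    have := Real.cosh_pos (β * g)
    have := Real.cosh_pos (β * h)
    positivity
  have htanh : Real.tanh (β * g) < 1 := by
    rw [Real.tanh_eq_sinh_div_cosh, div_lt_one (Real.cosh_pos _)]
    nlinarith [Real.cosh_sub_sinh (β * g), Real.exp_pos (-(β * g))]
  have hq : 0 ≤ 2 * g / γ := by positivity
  have hkey : 2 * g / γ < 1 := by
    nlinarith [mul_nonneg hq hE.le]
  have hglt : g < γ / 2 := by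
    rw [div_lt_one hγ] at hkey
    linarith
  have hsqlt : (μ - lam) ^ 2 + γ ^ 2 * r < γ ^ 2 / 4 := by
    nlinarith
  constructor
  · have hγ2 : (0:ℝ) < γ ^ 2 := by positivity
    have h2 : (μ - lam) ^ 2 / γ ^ 2 < 1 / 4 - r := by
      rw [div_lt_iff₀ hγ2]; nlinarith
    linarith
  · have h1 : (2 * |μ - lam|) ^ 2 < γ ^ 2 := by
      rw [mul_pow, sq_abs]
      nlinarith
    have := abs_nonneg (μ - lam)
    nlinarith [sq_nonneg (2 * |μ - lam| - γ)]
end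

section
/- Let γ > 0, μ, λ ∈ ℝ with γ > Γ(|μ−λ|, λ), where Γ is the critical coupling function. Define h_c := γ·(1/4 + (μ−λ)²/γ²) − λ. Then h_c > 0 and h_c is the unique nonnegative solution y of the equation Γ(|μ−λ|, λ + y) = γ. -/
/-- The zero-temperature critical BCS coupling
`Γ(x,y) = 2(y + √(y²−x²))·χ_{[0,y)}(x)·χ_{(0,∞)}(y) + 2x·χ_{[y,∞)}(x)`. -/
noncomputable def Gamma (x y : ℝ) : ℝ :=
  if 0 < y ∧ x < y then 2 * (y + Real.sqrt (y ^ 2 - x ^ 2)) else 2 * x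

/-- If `γ > Γ(|μ−λ|, λ)` then the critical magnetic field
`h_c := γ(1/4 + (μ−λ)²/γ²) − λ` is strictly positive and is the unique
nonnegative solution `y` of `Γ(|μ−λ|, λ + y) = γ`. -/
theorem critical_magnetic_field
    (γ μ lam : ℝ) (hγ : 0 < γ) (hΓ : Gamma |μ - lam| lam < γ)
    (hc : ℝ) (hhc : hc = γ * (1 / 4 + (μ - lam) ^ 2 / γ ^ 2) - lam) :
    0 < hc ∧ Gamma |μ - lam| (lam + hc) = γ ∧
      ∀ y : ℝ, 0 ≤ y → Gamma |μ - lam| (lam + y) = γ → y = hc := by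
  set x := |μ - lam| with hxdef
  have hx : 0 ≤ x := abs_nonneg _
  have hsq : (μ - lam) ^ 2 = x ^ 2 := (sq_abs _).symm
  have h2x : 2 * x < γ := by
    unfold Gamma at hΓ
    split_ifs at hΓ with h
    · have hs := Real.sqrt_nonneg (lam ^ 2 - x ^ 2)
      linarith [h.1, h.2]
    · exact hΓ
  have hb : lam + hc = γ / 4 + x ^ 2 / γ := by
    rw [hhc, hsq]; field_simp; ring
  have hkey : γ * (lam + hc) = γ ^ 2 / 4 + x ^ 2 := by
    rw [hb]; field_simp
  have hbx : x < lam + hc := by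
    have h1 : γ * x < γ * (lam + hc) := by
      rw [hkey]
      have hpos : 0 < γ - 2 * x := by linarith
      nlinarith [mul_pos hpos hpos]
    exact lt_of_mul_lt_mul_left h1 hγ.le
  have hbpos : 0 < lam + hc := lt_of_le_of_lt hx hbx
  have hquarter : 0 ≤ γ / 4 - x ^ 2 / γ := by
    have h1 : γ * (x ^ 2 / γ) ≤ γ * (γ / 4) := by
      have : γ * (x ^ 2 / γ) = x ^ 2 := by field_simp
      rw [this]
      nlinarith
    have := le_of_mul_le_mul_left h1 hγ
    linarith
  have hsqrt : Real.sqrt ((lam + hc) ^ 2 - x ^ 2) = γ / 4 - x ^ 2 / γ := by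
    have h4 : (lam + hc) ^ 2 - x ^ 2 = (γ / 4 - x ^ 2 / γ) ^ 2 := by
      rw [hb]; field_simp; ring
    rw [h4, Real.sqrt_sq hquarter]
  have hGeq : Gamma x (lam + hc) = γ := by
    unfold Gamma
    rw [if_pos ⟨hbpos, hbx⟩, hsqrt, hb]
    field_simp; ring
  have hpos : 0 < hc := by
    unfold Gamma at hΓ
    split_ifs at hΓ with h
    · obtain ⟨hl1, hxl⟩ := h
      set s := Real.sqrt (lam ^ 2 - x ^ 2) with hsdef
      have hs0 : 0 ≤ s := Real.sqrt_nonneg _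
      have hs2 : s ^ 2 = lam ^ 2 - x ^ 2 := Real.sq_sqrt (by nlinarith)
      have hf1 : 0 < γ - 2 * lam - 2 * s := by linarith
      have hf2 : 0 < γ - 2 * lam + 2 * s := by linarith
      have hprod := mul_pos hf1 hf2
      have h1 : γ * lam < γ * (lam + hc) := by rw [hkey]; nlinarith
      have := lt_of_mul_lt_mul_left h1 hγ.le
      linarith
    · push_neg at h
      rcases le_or_gt lam 0 with hl | hl
      · linarith
      · have := h hl
        linarith
  refine ⟨hpos, hGeq, ?_⟩
  intro y hy0 hy
  unfold Gamma at hy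
  split_ifs at hy with h
  · obtain ⟨hby, hxy⟩ := h
    set t := Real.sqrt ((lam + y) ^ 2 - x ^ 2) with htdef
    have ht0 : 0 ≤ t := Real.sqrt_nonneg _
    have ht2 : t ^ 2 = (lam + y) ^ 2 - x ^ 2 := Real.sq_sqrt (by nlinarith)
    have ht : t = γ / 2 - (lam + y) := by linarith
    have ht2' : (γ / 2 - (lam + y)) ^ 2 = (lam + y) ^ 2 - x ^ 2 := by rw [← ht]; exact ht2
    have h1 : γ * (lam + y) = γ ^ 2 / 4 + x ^ 2 := by linear_combination -ht2'
    have h2 : γ * (lam + y) = γ * (lam + hc) := by rw [h1, hkey]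
    have := mul_left_cancel₀ hγ.ne' h2
    linarith
  · linarith
end

section
/- Let g ≥ 0 and λ, h ∈ ℝ. Then lim_{β→∞} β^{-1}·ln( cosh(β·h) + e^{−λ·β}·cosh(β·g) ) = max(|h|, g − λ). -/
open Filter

private lemma cosh_half_bounds (x : ℝ) :
    Real.exp |x| / 2 ≤ Real.cosh x ∧ Real.cosh x ≤ Real.exp |x| := by
  rw [Real.cosh_eq]
  rcases abs_cases x with ⟨h1, h2⟩ | ⟨h1, h2⟩ <;> rw [h1]
  · have := Real.exp_le_exp.mpr (show -x ≤ x by linarith)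
    constructor <;> nlinarith [Real.exp_pos x, Real.exp_pos (-x)]
  · have := Real.exp_le_exp.mpr (show x ≤ -x by linarith)
    constructor <;> nlinarith [Real.exp_pos x, Real.exp_pos (-x)]

/-- Zero-temperature asymptotics:
`β⁻¹ log(cosh(βh) + e^{−λβ} cosh(βg)) → max(|h|, g − λ)` as `β → ∞`. -/
theorem zero_temperature_log_asymptotics (g lam h : ℝ) (hg : 0 ≤ g) :
    Tendsto (fun β : ℝ =>
        β⁻¹ * Real.log (Real.cosh (β * h) + Real.exp (-lam * β) * Real.cosh (β * g)))
      atTop (nhds (max |h| (g - lam))) := by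
  set M := max |h| (g - lam) with hM
  have hlim : Tendsto (fun β : ℝ => β⁻¹ * Real.log 2) atTop (nhds 0) := by
    simpa using tendsto_inv_atTop_zero.mul_const (Real.log 2)
  have hlo : Tendsto (fun β : ℝ => M - β⁻¹ * Real.log 2) atTop (nhds M) := by
    simpa using tendsto_const_nhds.sub hlim
  have hhi : Tendsto (fun β : ℝ => M + β⁻¹ * Real.log 2) atTop (nhds M) := by
    simpa using tendsto_const_nhds.add hlim
  refine tendsto_of_tendsto_of_tendsto_of_le_of_le' hlo hhi ?_ ?_
  all_goals
    filter_upwards [eventually_gt_atTop (0 : ℝ)] with β hβ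
  all_goals
    set S := Real.cosh (β * h) + Real.exp (-lam * β) * Real.cosh (β * g) with hS
    have hSpos : 0 < S := by positivity
    have hbh := cosh_half_bounds (β * h)
    have hbg := cosh_half_bounds (β * g)
    have habsh : |β * h| = β * |h| := by
      rw [abs_mul, abs_of_pos hβ]
    have habsg : |β * g| = β * g := by
      rw [abs_mul, abs_of_pos hβ, abs_of_nonneg hg]
    rw [habsh] at hbh
    rw [habsg] at hbg
  · -- lower bound : M - β⁻¹ log 2 ≤ β⁻¹ log S
    have hkey : Real.exp (β * M) / 2 ≤ S := by
      rcases max_cases |h| (g - lam) with ⟨hm, _⟩ | ⟨hm, _⟩ <;> rw [hM, hm]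
      · have := hbh.1
        nlinarith [mul_pos (Real.exp_pos (-lam * β)) ((Real.cosh_pos (β * g)))]
      · have h1 : Real.exp (-lam * β) * (Real.exp (β * g) / 2)
            ≤ Real.exp (-lam * β) * Real.cosh (β * g) :=
          mul_le_mul_of_nonneg_left hbg.1 (Real.exp_pos _).le
        have h2 : Real.exp (-lam * β) * (Real.exp (β * g) / 2)
            = Real.exp (β * (g - lam)) / 2 := by
          rw [mul_div_assoc', ← Real.exp_add]
          congr 1; ring
        nlinarith [Real.cosh_pos (β * h)]
    have hlog : β * M - Real.log 2 ≤ Real.log S := by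
      have := Real.log_le_log (by positivity) hkey
      rwa [Real.log_div (Real.exp_ne_zero _) two_ne_zero, Real.log_exp] at this
    have := mul_le_mul_of_nonneg_left hlog (inv_nonneg.2 hβ.le)
    calc M - β⁻¹ * Real.log 2 = β⁻¹ * (β * M - Real.log 2) := by
          field_simp
      _ ≤ β⁻¹ * Real.log S := this
  · -- upper bound : β⁻¹ log S ≤ M + β⁻¹ log 2
    have hkey : S ≤ 2 * Real.exp (β * M) := by
      have h1 : Real.cosh (β * h) ≤ Real.exp (β * M) := by
        refine hbh.2.trans (Real.exp_le_exp.2 ?_)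
        exact mul_le_mul_of_nonneg_left (le_max_left _ _) hβ.le
      have h2 : Real.exp (-lam * β) * Real.cosh (β * g) ≤ Real.exp (β * M) := by
        have h3 : Real.exp (-lam * β) * Real.cosh (β * g)
            ≤ Real.exp (-lam * β) * Real.exp (β * g) :=
          mul_le_mul_of_nonneg_left hbg.2 (Real.exp_pos _).le
        refine h3.trans ?_
        rw [← Real.exp_add]
        refine Real.exp_le_exp.2 ?_
        have : -lam * β + β * g = β * (g - lam) := by ring
        rw [this]
        exact mul_le_mul_of_nonneg_left (le_max_right _ _) hβ.le
      linarith
    have hlog : Real.log S ≤ β * M + Real.log 2 := by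
      have := Real.log_le_log hSpos hkey
      rwa [Real.log_mul two_ne_zero (Real.exp_ne_zero _), Real.log_exp, add_comm] at this
    have := mul_le_mul_of_nonneg_left hlog (inv_nonneg.2 hβ.le)
    calc β⁻¹ * Real.log S ≤ β⁻¹ * (β * M + Real.log 2) := this
      _ = M + β⁻¹ * Real.log 2 := by field_simp
end

section
/- Let μ > 0 and h ∈ ℝ with μ + |h| < γ ≤ 2·μ. Then μ − γ/2 ≥ 0 and μ − γ/2 < μ + γ/2 − √(γ·(μ + |h|)); i.e. the open interval (μ − γ/2, μ + γ/2 − √(γ(μ+|h|))) of admissible repulsion parameters λ is nonempty. Moreover, every λ in this interval satisfies γ > Γ(|μ − λ|, λ + |h|), where Γ(x,y) := 2(y + √(y²−x²)) for 0 ≤ x < y (with y > 0) and Γ(x,y) := 2x for x ≥ y or y ≤ 0. -/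
/-- For `μ > 0` and `μ + |h| < γ ≤ 2μ`, the interval
`(μ − γ/2, μ + γ/2 − √(γ(μ+|h|)))` of admissible repulsions `λ` is nonempty and
consists of nonnegative endpoints as stated, and every `λ` in it satisfies
`γ > Γ(|μ−λ|, λ+|h|)`: Coulomb repulsion restores superconductivity. -/
theorem repulsion_favors_superconductivity
    (μ h γ : ℝ) (hμ : 0 < μ) (h1 : μ + |h| < γ) (h2 : γ ≤ 2 * μ) :
    0 ≤ μ - γ / 2 ∧
    μ - γ / 2 < μ + γ / 2 - Real.sqrt (γ * (μ + |h|)) ∧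
    ∀ lam : ℝ, μ - γ / 2 < lam → lam < μ + γ / 2 - Real.sqrt (γ * (μ + |h|)) →
      Gamma |μ - lam| (lam + |h|) < γ := by
  have habs : (0:ℝ) ≤ |h| := abs_nonneg h
  have ha : 0 < μ + |h| := by linarith
  have hγ : 0 < γ := lt_trans ha h1
  set s := Real.sqrt (γ * (μ + |h|)) with hs
  have hs0 : 0 ≤ s := Real.sqrt_nonneg _
  have hs2 : s ^ 2 = γ * (μ + |h|) := Real.sq_sqrt (by positivity)
  have hals : μ + |h| < s := by nlinarith [sq_nonneg (s - (μ + |h|))]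
  have hsγ : s < γ := by nlinarith [sq_nonneg (γ - s)]
  refine ⟨by linarith, by linarith, ?_⟩
  intro lam hl1 hl2
  have hy : 0 < lam + |h| := by linarith
  have hylt : lam + |h| < γ / 2 := by linarith
  have hxlt : |μ - lam| < γ / 2 := by
    rw [abs_lt]; constructor <;> linarith
  unfold Gamma
  split
  · -- 2 * (y + √(y² - x²)) < γ
    rename_i hcond
    obtain ⟨-, hxy⟩ := hcond
    have hkey : (μ - lam) ^ 2 + γ ^ 2 / 4 - γ * (lam + |h|) > 0 := by
      nlinarith [hl2, hs2, hs0]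
    have hx2 : |μ - lam| ^ 2 = (μ - lam) ^ 2 := sq_abs _
    have hsqlt : Real.sqrt ((lam + |h|) ^ 2 - |μ - lam| ^ 2) < γ / 2 - (lam + |h|) := by
      rw [Real.sqrt_lt' (by linarith)]
      rw [hx2]; nlinarith
    linarith
  · linarith [abs_lt.mp hxlt]
end
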